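/- Alternating noise, odd path length: On the complete graph on n nodes with path set all simple paths of fixed odd length L ≥ 3, the alternating noise mechanism satisfies: Π = 1 − 2/n − (2/(L+1) + 2/(n−L+1) − 4/n)·α for α ∈ [0, 1/2], and Π = (2 − 2/(L+1) − 2/(n−L+1))·(1 − α) for α ∈ (1/2, 1]. -/

import Mathlib

open Finset

/-- Oriented edge set of a directed simple path of length `L` in the complete
graph, given by an injection of its `L+1` nodes. -/
def pedges {V : Type} [DecidableEq V] {L : ℕ} (f : Fin (L + 1) ↪ V) :
    Finset (V × V) :=
  (Finset.univ : Finset (Fin L)).image (fun i => (f i.castSucc, f i.succ))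

/-- The odd edges (1st, 3rd, 5th, ...) of the path. -/
def oddE {V : Type} [DecidableEq V] {L : ℕ} (f : Fin (L + 1) ↪ V) :
    Finset (V × V) :=
  ((Finset.univ : Finset (Fin L)).filter (fun i => i.val % 2 = 0)).image
    (fun i => (f i.castSucc, f i.succ))

/-- The even edges (2nd, 4th, ...) of the path. -/
def evenE {V : Type} [DecidableEq V] {L : ℕ} (f : Fin (L + 1) ↪ V) :
    Finset (V × V) :=
  ((Finset.univ : Finset (Fin L)).filter (fun i => i.val % 2 = 1)).image
    (fun i => (f i.castSucc, f i.succ))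

/-- An adversarial strategy: a distribution over nodes for each observation. -/
def ValidAdv {V : Type} [Fintype V] [DecidableEq V]
    (A : Finset (V × V) → V → ℝ) : Prop :=
  ∀ Q, (∀ v, 0 ≤ A Q v) ∧ (∑ v, A Q v) = 1

/-- Adversary success against the alternating mechanism at utility α ≤ 1/2:
odd edges revealed w.p. α, even edges w.p. α, nothing w.p. 1−2α. -/
def altSuccLow {V : Type} [Fintype V] [DecidableEq V] {L : ℕ} (α : ℝ)
    (A : Finset (V × V) → V → ℝ) (f : Fin (L + 1) ↪ V) : ℝ :=
  α * (A (oddE f) (f 0) + A (oddE f) (f (Fin.last L)))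
    + α * (A (evenE f) (f 0) + A (evenE f) (f (Fin.last L)))
    + (1 - 2 * α) * (A ∅ (f 0) + A ∅ (f (Fin.last L)))

/-- Adversary success against the alternating mechanism at utility α > 1/2:
odd edges revealed w.p. 1−α, even edges w.p. 1−α, full path w.p. 2α−1. -/
def altSuccHigh {V : Type} [Fintype V] [DecidableEq V] {L : ℕ} (α : ℝ)
    (A : Finset (V × V) → V → ℝ) (f : Fin (L + 1) ↪ V) : ℝ :=
  (1 - α) * (A (oddE f) (f 0) + A (oddE f) (f (Fin.last L)))
    + (1 - α) * (A (evenE f) (f 0) + A (evenE f) (f (Fin.last L)))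
    + (2 * α - 1) * (A (pedges f) (f 0) + A (pedges f) (f (Fin.last L)))

/-- Privacy of the alternating mechanism (low-utility branch). -/
noncomputable def altPrivLow (V : Type) [Fintype V] [DecidableEq V] (L : ℕ)
    (α : ℝ) : ℝ :=
  1 - sSup { x : ℝ | ∃ A, ValidAdv A ∧
      x = sInf { y : ℝ | ∃ f : Fin (L + 1) ↪ V, y = altSuccLow α A f } }

/-- Privacy of the alternating mechanism (high-utility branch). -/
noncomputable def altPrivHigh (V : Type) [Fintype V] [DecidableEq V] (L : ℕ)
    (α : ℝ) : ℝ :=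
  1 - sSup { x : ℝ | ∃ A, ValidAdv A ∧
      x = sInf { y : ℝ | ∃ f : Fin (L + 1) ↪ V, y = altSuccHigh α A f } }

/-!
Write `L = 2m + 1` and `n = |V|`. Guessing uniformly among the plausible endpoints (the `2m + 2`
vertices of the revealed odd edges, the `n - 2m` vertices untouched by the revealed even edges,
any vertex when nothing is revealed, the two ends of a fully revealed path) succeeds equally on
every path. No adversary does better on its worst path than on average over all paths, and that
average is at most the same value: permuting the position pairs `{2j, 2j + 1}` of a path fixes
its odd edges, so the odd observation cannot favour the endpoints over the other `2m` vertices
of the path; swapping an endpoint with a vertex outside the interior of the path fixes the even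
edges (and the empty observation), so these cannot favour the endpoints over the other vertices
outside the interior.
-/

open scoped symmDiff

section ValidAdv

variable {V : Type} [Fintype V] [DecidableEq V] {A : Finset (V × V) → V → ℝ}

lemma ValidAdv.sum_le_one (hA : ValidAdv A) (Q : Finset (V × V)) (s : Finset V) :
    ∑ v ∈ s, A Q v ≤ 1 :=
  (hA Q).2 ▸ sum_le_univ_sum_of_nonneg (hA Q).1

lemma ValidAdv.sum_apply_le_one {ι : Type*} [Fintype ι] (hA : ValidAdv A) (Q : Finset (V × V))
    (f : ι ↪ V) : ∑ i, A Q (f i) ≤ 1 := by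
  rw [← sum_map _ f]
  exact hA.sum_le_one Q _

lemma ValidAdv.add_le_one (hA : ValidAdv A) (Q : Finset (V × V)) {u v : V} (h : u ≠ v) :
    A Q u + A Q v ≤ 1 := by
  rw [← sum_pair h]
  exact hA.sum_le_one Q _

end ValidAdv

namespace AlternatingOdd

section Relabelling

variable {ι V M : Type*} [Fintype ι] [Fintype V] [AddCommMonoid M]

lemma sum_apply_perm_eq (F : (ι ↪ V) → V → M) (σ : Equiv.Perm ι)
    (hF : ∀ f, F (Equiv.embeddingCongr σ (Equiv.refl V) f) = F f) (i : ι) :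
    ∑ f : ι ↪ V, F f (f (σ i)) = ∑ f : ι ↪ V, F f (f i) := by
  refine (Fintype.sum_equiv (Equiv.embeddingCongr σ (Equiv.refl V)) _ _ fun f => ?_).symm
  rw [hF]
  simp [Equiv.embeddingCongr_apply, Function.Embedding.congr]

lemma card_sub_smul_sum_apply_eq [DecidableEq ι] [DecidableEq V] (J : Finset ι) {i : ι}
    (hi : i ∉ J) (F : (ι ↪ V) → V → M) (hF : ∀ f g : ι ↪ V, (∀ j ∈ J, f j = g j) → F f = F g) :
    (Fintype.card V - #J) • ∑ f : ι ↪ V, F f (f i) =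
      ∑ f : ι ↪ V, ∑ u ∈ (J.image f)ᶜ, F f u := by
  -- Swapping the values `f i` and `u` is an involution on the pairs `(f, u)` with `u ∉ f '' J`;
  -- it leaves `F f` unchanged and trades `f i` for `u`.
  let relabel (x : Σ _ : ι ↪ V, V) : Σ _ : ι ↪ V, V :=
    ⟨x.1.trans (Equiv.swap (x.1 i) x.2).toEmbedding, x.1 i⟩
  have relabel_eqOn (f : ι ↪ V) (u : V) (hu : u ∉ J.image f) :
      ∀ j ∈ J, (relabel ⟨f, u⟩).1 j = f j := by
    intro j hj
    refine Equiv.swap_apply_of_ne_of_ne (f.injective.ne ?_) fun h => hu (mem_image.2 ⟨j, hj, h⟩)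
    rintro rfl
    exact hi hj
  have relabel_image (f : ι ↪ V) (u : V) (hu : u ∉ J.image f) :
      J.image (relabel ⟨f, u⟩).1 = J.image f :=
    image_congr fun j hj => relabel_eqOn f u hu j hj
  calc (Fintype.card V - #J) • ∑ f : ι ↪ V, F f (f i)
      = ∑ f : ι ↪ V, ∑ _u ∈ (J.image f)ᶜ, F f (f i) := by
        rw [smul_sum]
        refine sum_congr rfl fun f _ => ?_
        rw [sum_const, card_compl, card_image_of_injective _ f.injective]
    _ = ∑ f : ι ↪ V, ∑ u ∈ (J.image f)ᶜ, F f u := by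
      rw [sum_sigma', sum_sigma']
      have relabel_mem : ∀ x ∈ univ.sigma fun f : ι ↪ V => (J.image f)ᶜ,
          relabel x ∈ univ.sigma fun f : ι ↪ V => (J.image f)ᶜ := by
        rintro ⟨f, u⟩ hu
        simp only [mem_sigma, mem_univ, mem_compl, true_and] at hu ⊢
        rw [relabel_image f u hu, f.injective.mem_finset_image]
        exact hi
      have relabel_relabel : ∀ x ∈ univ.sigma fun f : ι ↪ V => (J.image f)ᶜ,
          relabel (relabel x) = x := by
        rintro ⟨f, u⟩ -
        simp only [relabel, Sigma.mk.injEq, Function.Embedding.trans_apply, Equiv.coe_toEmbedding,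
          Equiv.swap_apply_left, heq_eq_eq, and_true]
        ext p
        simp [Equiv.swap_comm]
      refine sum_nbij' relabel relabel relabel_mem relabel_mem relabel_relabel relabel_relabel ?_
      rintro ⟨f, u⟩ hu
      simp only [mem_sigma, mem_univ, mem_compl, true_and] at hu
      rw [hF _ _ fun j hj => (relabel_eqOn f u hu j hj).symm]

end Relabelling

lemma sSup_sInf_eq_of_sum_le {𝒜 P : Type*} [Fintype P] [Nonempty P] {valid : 𝒜 → Prop}
    {S : 𝒜 → P → ℝ} {v : ℝ} (hsum : ∀ A, valid A → ∑ p, S A p ≤ Fintype.card P * v)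
    {A₀ : 𝒜} (hA₀ : valid A₀) (hA₀v : ∀ p, S A₀ p = v) :
    sSup {x | ∃ A, valid A ∧ x = sInf {y | ∃ p, y = S A p}} = v := by
  have hrange (A : 𝒜) : {y | ∃ p, y = S A p} = Set.range (S A) := by
    ext
    simp [eq_comm]
  simp only [hrange]
  refine IsGreatest.csSup_eq ⟨⟨A₀, hA₀, ?_⟩, ?_⟩
  · rw [show S A₀ = fun _ => v from funext hA₀v, Set.range_const, csInf_singleton]
  · rintro x ⟨A, hA, rfl⟩
    obtain ⟨p, -, hp⟩ := exists_le_of_sum_le univ_nonempty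
      (by simpa using hsum A hA : ∑ p, S A p ≤ ∑ _p : P, v)
    exact (csInf_le (Set.finite_range _).bddBelow ⟨p, rfl⟩).trans hp


variable {V : Type}

def edge {L : ℕ} (f : Fin (L + 1) ↪ V) (i : Fin L) : V × V := (f i.castSucc, f i.succ)

lemma edge_injective {L : ℕ} (f : Fin (L + 1) ↪ V) : Function.Injective (edge f) :=
  fun _ _ h => Fin.castSucc_injective _ (f.injective (Prod.ext_iff.1 h).1)

variable [DecidableEq V]

def vertices (Q : Finset (V × V)) : Finset V := Q.image Prod.fst ∪ Q.image Prod.snd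

def ends (Q : Finset (V × V)) : Finset V := Q.image Prod.fst ∆ Q.image Prod.snd

lemma vertices_image_edge {L : ℕ} (f : Fin (L + 1) ↪ V) (S : Finset (Fin L)) :
    vertices (S.image (edge f)) = (S.image Fin.castSucc ∪ S.image Fin.succ).image f := by
  simp only [vertices, image_union, image_image]
  rfl

lemma ends_image_edge {L : ℕ} (f : Fin (L + 1) ↪ V) (S : Finset (Fin L)) :
    ends (S.image (edge f)) = (S.image Fin.castSucc ∆ S.image Fin.succ).image f := by
  rw [ends, image_symmDiff _ _ f.injective, image_image, image_image, image_image, image_image]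
  rfl

lemma image_castSucc_symmDiff_image_succ (L : ℕ) :
    (univ.image Fin.castSucc ∆ univ.image Fin.succ : Finset (Fin (L + 1 + 1))) =
      {0, Fin.last _} := by
  ext p
  simp only [mem_symmDiff, mem_image, mem_univ, true_and, mem_insert, mem_singleton]
  rw [Fin.exists_castSucc_eq, Fin.exists_succ_eq]
  have : (0 : Fin (L + 1 + 1)) ≠ Fin.last _ := (Fin.last_pos).ne
  grind

lemma card_filter_odd (m : ℕ) :
    #(univ.filter fun i : Fin (2 * m + 1) => i.val % 2 = 1) = m := by
  have : (univ.filter fun i : Fin (2 * m + 1) => i.val % 2 = 1) =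
      univ.image fun j : Fin m => (⟨2 * j + 1, by omega⟩ : Fin (2 * m + 1)) := by
    ext i
    simp only [mem_filter, mem_univ, true_and, mem_image]
    constructor
    · intro hi; exact ⟨⟨i / 2, by omega⟩, by ext; simp; omega⟩
    · rintro ⟨j, rfl⟩; simp [Nat.add_mod]
  rw [this, card_image_of_injective _ fun a b h => by simpa [Fin.ext_iff] using h, card_univ,
    Fintype.card_fin]

lemma card_filter_even (m : ℕ) :
    #(univ.filter fun i : Fin (2 * m + 1) => i.val % 2 = 0) = m + 1 := by
  have := card_filter_add_card_filter_not (s := univ)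
    fun i : Fin (2 * m + 1) => i.val % 2 = 1
  simp only [Nat.mod_two_ne_one, card_filter_odd, card_univ, Fintype.card_fin] at this
  omega

variable {m : ℕ}

lemma image_castSucc_union_image_succ_even :
    ((univ.filter fun i : Fin (2 * m + 1) => i.val % 2 = 0).image Fin.castSucc ∪
      (univ.filter fun i : Fin (2 * m + 1) => i.val % 2 = 0).image Fin.succ) = univ := by
  ext p
  simp only [mem_union, mem_image, mem_filter, mem_univ, true_and, iff_true]
  rcases Nat.even_or_odd p with ⟨k, hk⟩ | ⟨k, hk⟩
  · exact Or.inl ⟨⟨p, by omega⟩, by simp; omega, rfl⟩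
  · exact Or.inr ⟨⟨p - 1, by omega⟩, by simp; omega, by ext; simp; omega⟩

lemma image_castSucc_union_image_succ_odd :
    ((univ.filter fun i : Fin (2 * m + 1) => i.val % 2 = 1).image Fin.castSucc ∪
      (univ.filter fun i : Fin (2 * m + 1) => i.val % 2 = 1).image Fin.succ) =
      {0, Fin.last _}ᶜ := by
  ext p
  simp only [mem_union, mem_image, mem_filter, mem_univ, true_and, mem_compl, mem_insert,
    mem_singleton, not_or]
  constructor
  · rintro (⟨i, hi, rfl⟩ | ⟨i, hi, rfl⟩) <;>
      simp only [Fin.ext_iff, Fin.val_castSucc, Fin.val_succ, Fin.val_zero, Fin.val_last] <;> omega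
  · rintro ⟨h0, hl⟩
    simp only [Fin.ext_iff, Fin.val_zero, Fin.val_last] at h0 hl
    rcases Nat.even_or_odd p with ⟨k, hk⟩ | ⟨k, hk⟩
    · exact Or.inr ⟨⟨p - 1, by omega⟩, by simp; omega, by ext; simp; omega⟩
    · exact Or.inl ⟨⟨p, by omega⟩, by simp; omega, rfl⟩

lemma oddE_eq_image_edge {L : ℕ} (f : Fin (L + 1) ↪ V) :
    oddE f = (univ.filter fun i : Fin L => i.val % 2 = 0).image (edge f) := rfl

lemma evenE_eq_image_edge {L : ℕ} (f : Fin (L + 1) ↪ V) :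
    evenE f = (univ.filter fun i : Fin L => i.val % 2 = 1).image (edge f) := rfl

lemma pedges_eq_image_edge {L : ℕ} (f : Fin (L + 1) ↪ V) : pedges f = univ.image (edge f) := rfl

lemma card_oddE (f : Fin (2 * m + 1 + 1) ↪ V) : #(oddE f) = m + 1 := by
  rw [oddE_eq_image_edge, card_image_of_injective _ (edge_injective f), card_filter_even]

lemma card_evenE (f : Fin (2 * m + 1 + 1) ↪ V) : #(evenE f) = m := by
  rw [evenE_eq_image_edge, card_image_of_injective _ (edge_injective f), card_filter_odd]

lemma card_pedges {L : ℕ} (f : Fin (L + 1) ↪ V) : #(pedges f) = L := by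
  rw [pedges_eq_image_edge, card_image_of_injective _ (edge_injective f), card_univ,
    Fintype.card_fin]

lemma vertices_oddE (f : Fin (2 * m + 1 + 1) ↪ V) : vertices (oddE f) = univ.image f := by
  rw [oddE_eq_image_edge, vertices_image_edge, image_castSucc_union_image_succ_even]

lemma vertices_evenE (f : Fin (2 * m + 1 + 1) ↪ V) :
    vertices (evenE f) = ({0, Fin.last _}ᶜ : Finset _).image f := by
  rw [evenE_eq_image_edge, vertices_image_edge, image_castSucc_union_image_succ_odd]

lemma ends_pedges {L : ℕ} (f : Fin (L + 1 + 1) ↪ V) :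
    ends (pedges f) = {f 0, f (Fin.last _)} := by
  rw [pedges_eq_image_edge, ends_image_edge, image_castSucc_symmDiff_image_succ, image_insert,
    image_singleton]

lemma evenE_congr {f g : Fin (2 * m + 1 + 1) ↪ V}
    (h : ∀ p ∈ ({0, Fin.last _}ᶜ : Finset _), f p = g p) : evenE f = evenE g := by
  rw [evenE_eq_image_edge, evenE_eq_image_edge]
  refine image_congr fun i hi => Prod.ext (h _ ?_) (h _ ?_) <;>
    rw [← image_castSucc_union_image_succ_odd]
  · exact mem_union_left _ (mem_image_of_mem _ hi)
  · exact mem_union_right _ (mem_image_of_mem _ hi)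

/-- Position `2 * j + b` of a path is `(j, b)`: block `j` carries the `j`-th odd edge. -/
def blockEquiv (m : ℕ) : Fin (m + 1) × Fin 2 ≃ Fin (2 * m + 1 + 1) :=
  finProdFinEquiv.trans (finCongr (by ring))

@[simp] lemma val_blockEquiv (x : Fin (m + 1) × Fin 2) : (blockEquiv m x : ℕ) = x.2 + 2 * x.1 :=
  rfl

lemma oddE_eq_image_blockEquiv (f : Fin (2 * m + 1 + 1) ↪ V) :
    oddE f = univ.image fun j => (f (blockEquiv m (j, 0)), f (blockEquiv m (j, 1))) := by
  ext ⟨a, b⟩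
  simp only [oddE, mem_image, mem_filter, mem_univ, true_and, Prod.mk.injEq]
  constructor
  · rintro ⟨i, hi, rfl, rfl⟩
    refine ⟨⟨i / 2, by omega⟩, ?_, ?_⟩ <;> congr 1 <;> ext <;> simp <;> omega
  · rintro ⟨j, rfl, rfl⟩
    refine ⟨⟨2 * j, by omega⟩, by simp, ?_, ?_⟩ <;> congr 1 <;> ext <;> simp [add_comm]

def blockPerm (τ : Equiv.Perm (Fin (m + 1))) : Equiv.Perm (Fin (2 * m + 1 + 1)) :=
  (blockEquiv m).symm.trans ((τ.prodCongr (Equiv.refl _)).trans (blockEquiv m))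

lemma blockPerm_blockEquiv (τ : Equiv.Perm (Fin (m + 1))) (j : Fin (m + 1)) (b : Fin 2) :
    blockPerm τ (blockEquiv m (j, b)) = blockEquiv m (τ j, b) := by
  simp [blockPerm]

lemma oddE_embeddingCongr_blockPerm (τ : Equiv.Perm (Fin (m + 1)))
    (f : Fin (2 * m + 1 + 1) ↪ V) :
    oddE (Equiv.embeddingCongr (blockPerm τ) (Equiv.refl V) f) = oddE f := by
  have h (j : Fin (m + 1)) (b : Fin 2) :
      (blockPerm τ).symm (blockEquiv m (j, b)) = blockEquiv m (τ.symm j, b) := by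
    rw [Equiv.symm_apply_eq, blockPerm_blockEquiv, Equiv.apply_symm_apply]
  rw [oddE_eq_image_blockEquiv, oddE_eq_image_blockEquiv]
  simp only [Equiv.embeddingCongr_apply, Function.Embedding.congr_apply, Function.comp_apply, h,
    Function.Embedding.trans_apply, Equiv.coe_toEmbedding, Equiv.refl_apply]
  conv_rhs => rw [← image_univ_equiv τ.symm, image_image]
  rfl

section Averaging

variable [Fintype V] {A : Finset (V × V) → V → ℝ}

def endMass (A : Finset (V × V) → V → ℝ) (Q : Finset (V × V)) {L : ℕ}
    (f : Fin (L + 1) ↪ V) : ℝ :=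
  A Q (f 0) + A Q (f (Fin.last L))

lemma sum_endMass_oddE_le (hA : ValidAdv A) :
    ∑ f : Fin (2 * m + 1 + 1) ↪ V, endMass A (oddE f) f ≤
      Fintype.card (Fin (2 * m + 1 + 1) ↪ V) * (2 / (2 * m + 2)) := by
  rw [← mul_div_assoc, le_div_iff₀' (by positivity)]
  suffices (m + 1 : ℝ) * ∑ f : Fin (2 * m + 1 + 1) ↪ V, endMass A (oddE f) f ≤
      Fintype.card (Fin (2 * m + 1 + 1) ↪ V) by linarith
  let S (b : Fin 2) (j : Fin (m + 1)) : ℝ :=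
    ∑ f : Fin (2 * m + 1 + 1) ↪ V, A (oddE f) (f (blockEquiv m (j, b)))
  have hS (b : Fin 2) (j : Fin (m + 1)) : S b j = S b 0 := by
    simp only [S]
    rw [← Equiv.swap_apply_left 0 j, ← blockPerm_blockEquiv]
    exact sum_apply_perm_eq (fun f => A (oddE f)) _
      (fun f => by rw [oddE_embeddingCongr_blockPerm]) _
  have h0 : (0 : Fin (2 * m + 1 + 1)) = blockEquiv m (0, 0) := by ext; simp
  have hlast : Fin.last (2 * m + 1) = blockEquiv m (Fin.last m, 1) := by ext; simp; ring
  calc (m + 1 : ℝ) * ∑ f : Fin (2 * m + 1 + 1) ↪ V, endMass A (oddE f) f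
      = ∑ _j : Fin (m + 1), (S 0 0 + S 1 0) := by
        simp only [endMass, sum_add_distrib]
        rw [h0, hlast, ← hS 1 (Fin.last m)]
        simp [S, mul_add]
    _ = ∑ j : Fin (m + 1), ∑ b : Fin 2, S b j :=
        sum_congr rfl fun j _ => by rw [Fin.sum_univ_two, hS 0 j, hS 1 j]
    _ = ∑ f : Fin (2 * m + 1 + 1) ↪ V, ∑ p, A (oddE f) (f p) := by
        rw [← Fintype.sum_prod_type', sum_comm]
        exact sum_congr rfl fun f _ => Equiv.sum_comp (blockEquiv m) fun p => A (oddE f) (f p)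
    _ ≤ ∑ _f : Fin (2 * m + 1 + 1) ↪ V, 1 := sum_le_sum fun f _ => hA.sum_apply_le_one _ f
    _ = Fintype.card (Fin (2 * m + 1 + 1) ↪ V) := by simp

lemma card_compl_zero_last (L : ℕ) :
    #({0, Fin.last (L + 1)}ᶜ : Finset (Fin (L + 1 + 1))) = L := by
  rw [card_compl, card_pair Fin.last_pos.ne, Fintype.card_fin]
  omega

lemma sum_endMass_evenE_le (hV : 2 * m < Fintype.card V) (hA : ValidAdv A) :
    ∑ f : Fin (2 * m + 1 + 1) ↪ V, endMass A (evenE f) f ≤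
      Fintype.card (Fin (2 * m + 1 + 1) ↪ V) * (2 / ((Fintype.card V - 2 * m : ℕ) : ℝ)) := by
  rw [← mul_div_assoc, le_div_iff₀' (by norm_cast; omega)]
  have key (i : Fin (2 * m + 1 + 1)) (hi : i ∉ ({0, Fin.last _}ᶜ : Finset _)) :
      ((Fintype.card V - 2 * m : ℕ) : ℝ) *
          ∑ f : Fin (2 * m + 1 + 1) ↪ V, A (evenE f) (f i) ≤
        Fintype.card (Fin (2 * m + 1 + 1) ↪ V) := by
    have := card_sub_smul_sum_apply_eq _ hi (fun f => A (evenE f)) fun f g h => by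
      rw [evenE_congr h]
    rw [card_compl_zero_last, nsmul_eq_mul] at this
    rw [this]
    calc _ ≤ ∑ _f : Fin (2 * m + 1 + 1) ↪ V, (1 : ℝ) :=
          sum_le_sum fun f _ => hA.sum_le_one _ _
      _ = _ := by simp
  simp only [endMass, sum_add_distrib, mul_add]
  linarith [key 0 (by simp), key (Fin.last _) (by simp)]

lemma sum_endMass_empty [Nonempty V] {L : ℕ} (hA : ValidAdv A) :
    ∑ f : Fin (L + 1) ↪ V, endMass A ∅ f =
      Fintype.card (Fin (L + 1) ↪ V) * (2 / Fintype.card V) := by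
  rw [← mul_div_assoc, eq_div_iff (by positivity)]
  have key (i : Fin (L + 1)) :
      (Fintype.card V : ℝ) * ∑ f : Fin (L + 1) ↪ V, A ∅ (f i) =
        Fintype.card (Fin (L + 1) ↪ V) := by
    have := card_sub_smul_sum_apply_eq ∅ (notMem_empty i) (fun _ => A ∅) fun _ _ _ => rfl
    simp only [card_empty, Nat.sub_zero, nsmul_eq_mul, image_empty, compl_empty, (hA ∅).2] at this
    simpa using this
  simp only [endMass, sum_add_distrib, add_mul]
  rw [mul_comm, key, mul_comm, key]
  ring

lemma sum_endMass_pedges_le {L : ℕ} (hA : ValidAdv A) :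
    ∑ f : Fin (L + 1 + 1) ↪ V, endMass A (pedges f) f ≤
      Fintype.card (Fin (L + 1 + 1) ↪ V) := by
  calc _ ≤ ∑ _f : Fin (L + 1 + 1) ↪ V, (1 : ℝ) :=
        sum_le_sum fun f _ => hA.add_le_one _ (f.injective.ne Fin.last_pos.ne)
    _ = _ := by simp

end Averaging

section Adversary

noncomputable def uniformOn (W : Finset V) (v : V) : ℝ := if v ∈ W then (#W : ℝ)⁻¹ else 0

lemma uniformOn_nonneg (W : Finset V) (v : V) : 0 ≤ uniformOn W v := by
  unfold uniformOn
  positivity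

lemma uniformOn_add_uniformOn {W : Finset V} {u v : V} (hu : u ∈ W) (hv : v ∈ W) :
    uniformOn W u + uniformOn W v = 2 / #W := by
  simp only [uniformOn, if_pos hu, if_pos hv]
  ring

variable [Fintype V]

lemma sum_uniformOn {W : Finset V} (hW : W.Nonempty) : ∑ v, uniformOn W v = 1 := by
  simp only [uniformOn, sum_ite_mem, univ_inter, sum_const, nsmul_eq_mul]
  exact mul_inv_cancel₀ (Nat.cast_ne_zero.2 hW.card_pos.ne')

/-- The size of an observation tells what was revealed: `m + 1` odd edges, `m` even edges, the
`2 * m + 1` edges of the whole path, or nothing. -/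
def guess (m : ℕ) (Q : Finset (V × V)) : Finset V :=
  if #Q = m + 1 then vertices Q
  else if #Q = m then (vertices Q)ᶜ
  else if #Q = 2 * m + 1 then ends Q
  else univ

noncomputable def adversary (m : ℕ) (Q : Finset (V × V)) : V → ℝ :=
  uniformOn (if (guess m Q).Nonempty then guess m Q else univ)

lemma validAdv_adversary [Nonempty V] : ValidAdv (adversary (V := V) m) := fun Q => by
  refine ⟨uniformOn_nonneg _, sum_uniformOn ?_⟩
  split_ifs with h
  exacts [h, univ_nonempty]

lemma endMass_adversary {Q : Finset (V × V)} {L : ℕ} {f : Fin (L + 1) ↪ V}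
    (h0 : f 0 ∈ guess m Q) (hlast : f (Fin.last L) ∈ guess m Q) :
    endMass (adversary m) Q f = 2 / #(guess m Q) := by
  rw [endMass, adversary, if_pos ⟨_, h0⟩, uniformOn_add_uniformOn h0 hlast]

lemma endMass_adversary_oddE (f : Fin (2 * m + 1 + 1) ↪ V) :
    endMass (adversary m) (oddE f) f = 2 / (2 * m + 2) := by
  have hguess : guess m (oddE f) = univ.image f := by
    rw [guess, if_pos (card_oddE f), vertices_oddE]
  rw [endMass_adversary (by simp [hguess]) (by simp [hguess]), hguess,
    card_image_of_injective _ f.injective, card_univ, Fintype.card_fin]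
  push_cast
  ring

lemma endMass_adversary_evenE (f : Fin (2 * m + 1 + 1) ↪ V) :
    endMass (adversary m) (evenE f) f = 2 / ((Fintype.card V - 2 * m : ℕ) : ℝ) := by
  have hguess : guess m (evenE f) = (({0, Fin.last _}ᶜ : Finset _).image f)ᶜ := by
    rw [guess, if_neg (by rw [card_evenE]; omega), if_pos (card_evenE f), vertices_evenE]
  rw [endMass_adversary (by simp [hguess, f.injective.mem_finset_image])
    (by simp [hguess, f.injective.mem_finset_image]), hguess, card_compl,
    card_image_of_injective _ f.injective, card_compl_zero_last]

lemma endMass_adversary_empty (hm : 1 ≤ m) {L : ℕ} (f : Fin (L + 1) ↪ V) :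
    endMass (adversary m) ∅ f = 2 / Fintype.card V := by
  have hguess : guess m (∅ : Finset (V × V)) = univ := by
    rw [guess, if_neg (by simp), if_neg (by simp; omega), if_neg (by simp)]
  rw [endMass_adversary (by simp [hguess]) (by simp [hguess]), hguess, card_univ]

lemma endMass_adversary_pedges (hm : 1 ≤ m) (f : Fin (2 * m + 1 + 1) ↪ V) :
    endMass (adversary m) (pedges f) f = 1 := by
  have hguess : guess m (pedges f) = {f 0, f (Fin.last _)} := by
    rw [guess, card_pedges, if_neg (by omega), if_neg (by omega), if_pos rfl, ends_pedges]
  rw [endMass_adversary (by simp [hguess]) (by simp [hguess]), hguess,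
    card_pair (f.injective.ne Fin.last_pos.ne)]
  norm_num

end Adversary

section Value

variable [Fintype V] {A : Finset (V × V) → V → ℝ} {α : ℝ}

lemma sum_altSuccLow_le (hV : 2 * m < Fintype.card V) (hα0 : 0 ≤ α) (hA : ValidAdv A) :
    ∑ f : Fin (2 * m + 1 + 1) ↪ V, altSuccLow α A f ≤
      Fintype.card (Fin (2 * m + 1 + 1) ↪ V) * (α * (2 / (2 * m + 2)) +
        α * (2 / ((Fintype.card V - 2 * m : ℕ) : ℝ)) +
        (1 - 2 * α) * (2 / Fintype.card V)) := by
  have : Nonempty V := Fintype.card_pos_iff.1 (by omega)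
  have hodd := sum_endMass_oddE_le (m := m) hA
  have heven := sum_endMass_evenE_le hV hA
  have hempty := sum_endMass_empty (L := 2 * m + 1) hA
  calc ∑ f : Fin (2 * m + 1 + 1) ↪ V, altSuccLow α A f
      = α * ∑ f : Fin (2 * m + 1 + 1) ↪ V, endMass A (oddE f) f +
          α * ∑ f : Fin (2 * m + 1 + 1) ↪ V, endMass A (evenE f) f +
          (1 - 2 * α) * ∑ f : Fin (2 * m + 1 + 1) ↪ V, endMass A ∅ f := by
        simp only [mul_sum, ← sum_add_distrib]
        rfl
    _ ≤ α * (Fintype.card (Fin (2 * m + 1 + 1) ↪ V) * (2 / (2 * m + 2))) +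
          α * (Fintype.card (Fin (2 * m + 1 + 1) ↪ V) *
            (2 / ((Fintype.card V - 2 * m : ℕ) : ℝ))) +
          (1 - 2 * α) * (Fintype.card (Fin (2 * m + 1 + 1) ↪ V) * (2 / Fintype.card V)) := by
        rw [hempty]
        gcongr
    _ = _ := by ring

lemma altSuccLow_adversary (hm : 1 ≤ m) (f : Fin (2 * m + 1 + 1) ↪ V) :
    altSuccLow α (adversary m) f = α * (2 / (2 * m + 2)) +
      α * (2 / ((Fintype.card V - 2 * m : ℕ) : ℝ)) + (1 - 2 * α) * (2 / Fintype.card V) := by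
  rw [altSuccLow, ← endMass, ← endMass, ← endMass, endMass_adversary_oddE,
    endMass_adversary_evenE, endMass_adversary_empty hm]

lemma sum_altSuccHigh_le (hV : 2 * m < Fintype.card V) (hα0 : 1 / 2 < α) (hα1 : α ≤ 1)
    (hA : ValidAdv A) :
    ∑ f : Fin (2 * m + 1 + 1) ↪ V, altSuccHigh α A f ≤
      Fintype.card (Fin (2 * m + 1 + 1) ↪ V) * ((1 - α) * (2 / (2 * m + 2)) +
        (1 - α) * (2 / ((Fintype.card V - 2 * m : ℕ) : ℝ)) + (2 * α - 1)) := by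
  have hodd := sum_endMass_oddE_le (m := m) hA
  have heven := sum_endMass_evenE_le hV hA
  have hpath := sum_endMass_pedges_le (L := 2 * m) hA
  calc ∑ f : Fin (2 * m + 1 + 1) ↪ V, altSuccHigh α A f
      = (1 - α) * ∑ f : Fin (2 * m + 1 + 1) ↪ V, endMass A (oddE f) f +
          (1 - α) * ∑ f : Fin (2 * m + 1 + 1) ↪ V, endMass A (evenE f) f +
          (2 * α - 1) * ∑ f : Fin (2 * m + 1 + 1) ↪ V, endMass A (pedges f) f := by
        simp only [mul_sum, ← sum_add_distrib]
        rfl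
    _ ≤ (1 - α) * (Fintype.card (Fin (2 * m + 1 + 1) ↪ V) * (2 / (2 * m + 2))) +
          (1 - α) * (Fintype.card (Fin (2 * m + 1 + 1) ↪ V) *
            (2 / ((Fintype.card V - 2 * m : ℕ) : ℝ))) +
          (2 * α - 1) * Fintype.card (Fin (2 * m + 1 + 1) ↪ V) := by
        gcongr
        linarith
    _ = _ := by ring

lemma altSuccHigh_adversary (hm : 1 ≤ m) (f : Fin (2 * m + 1 + 1) ↪ V) :
    altSuccHigh α (adversary m) f = (1 - α) * (2 / (2 * m + 2)) +
      (1 - α) * (2 / ((Fintype.card V - 2 * m : ℕ) : ℝ)) + (2 * α - 1) := by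
  rw [altSuccHigh, ← endMass, ← endMass, ← endMass, endMass_adversary_oddE,
    endMass_adversary_evenE, endMass_adversary_pedges hm, mul_one]

end Value

end AlternatingOdd

open AlternatingOdd

theorem alternating_odd
    {V : Type} [Fintype V] [DecidableEq V]
    (n L : ℕ) (hn : n = Fintype.card V)
    (hL3 : 3 ≤ L) (hLo : Odd L) (hLn : L < n)
    (α : ℝ) :
    (0 ≤ α → α ≤ 1 / 2 →
      altPrivLow V L α
        = 1 - 2 / n - (2 / ((L : ℝ) + 1) + 2 / ((n : ℝ) - L + 1) - 4 / n) * α) ∧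
    (1 / 2 < α → α ≤ 1 →
      altPrivHigh V L α
        = (2 - 2 / ((L : ℝ) + 1) - 2 / ((n : ℝ) - L + 1)) * (1 - α)) := by
  obtain ⟨m, rfl⟩ := hLo
  subst hn
  have hm : 1 ≤ m := by omega
  have : Nonempty V := Fintype.card_pos_iff.1 (by omega)
  have : Nonempty (Fin (2 * m + 1 + 1) ↪ V) :=
    Function.Embedding.nonempty_of_card_le (by rw [Fintype.card_fin]; omega)
  have hk : ((Fintype.card V - 2 * m : ℕ) : ℝ) = Fintype.card V - (2 * m + 1) + 1 := by
    push_cast [Nat.cast_sub (by omega : 2 * m ≤ Fintype.card V)]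
    ring
  have hk0 : (Fintype.card V : ℝ) - (2 * m + 1) + 1 ≠ 0 := by
    rw [← hk]; norm_cast; omega
  have hn0 : (Fintype.card V : ℝ) ≠ 0 := by norm_cast; omega
  refine ⟨fun hα0 hα1 => ?_, fun hα0 hα1 => ?_⟩
  · rw [altPrivLow, sSup_sInf_eq_of_sum_le (valid := ValidAdv)
      (fun A hA => sum_altSuccLow_le (by omega) hα0 hA) validAdv_adversary
      (altSuccLow_adversary hm), hk]
    push_cast
    field_simp
    ring
  · rw [altPrivHigh, sSup_sInf_eq_of_sum_le (valid := ValidAdv)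
      (fun A hA => sum_altSuccHigh_le (by omega) hα0 hα1 hA) validAdv_adversary
      (altSuccHigh_adversary hm), hk]
    push_cast
    field_simp
    ring
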